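/- Define g : (0,1) × (0,∞) → ℝ³ by g(x₁, y₁) = χ_{4,2}((x₁), (y₁, 1)) / ‖χ_{4,2}((x₁), (y₁, 1))‖₁, the ℓ₁-normalized coalescence vector of the two-epoch demography with break parameter x₁ and population sizes (y₁, 1). Then g is injective on the set (0,1) × ((0,∞) \ {1}), i.e., the map fails to be one-to-one only along y₁ = 1 (where g is constant equal to (2/3, 2/9, 1/9)). -/

import Mathlib

/-!
Rescaling the coordinates of `coalVec x y` by `(1, 3, 6)` gives `y • 𝟙 + (1 - y) • (x, x³, x⁶)`.
If `g u v = g w z`, then `coalVec w z = c • coalVec u v` with `c > 0`, and consecutive differences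
of the rescaled coordinates kill `𝟙`, leaving
`(1 - z) • (w³ - w, w⁶ - w³) = c (1 - v) • (u³ - u, u⁶ - u³)`.
For `v, z ≠ 1` these two vectors are parallel, which forces `u = w`: their cross difference
factors as `(w - u) u w (1 - u) (1 - w) Q(u, w)` with `Q` a polynomial with positive coefficients.
The first coordinate then gives `c = 1` and `z = v`.
-/

/-- The (unnormalized) coalescence vector `χ_{4,2}((x₁), (y₁, 1))` of the two-epoch
demography with break parameter `x₁` and population sizes `(y₁, 1)`:
`(y₁(1−x₁) + x₁, (y₁(1−x₁³) + x₁³)/3, (y₁(1−x₁⁶) + x₁⁶)/6)`. -/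
noncomputable def coalVec (x₁ y₁ : ℝ) : Fin 3 → ℝ :=
  ![y₁ * (1 - x₁) + x₁, (y₁ * (1 - x₁ ^ 3) + x₁ ^ 3) / 3, (y₁ * (1 - x₁ ^ 6) + x₁ ^ 6) / 6]

/-- `g(x₁, y₁)`: the `ℓ₁`-normalization of `χ_{4,2}((x₁), (y₁, 1))`. -/
noncomputable def g (x₁ y₁ : ℝ) : Fin 3 → ℝ :=
  (coalVec x₁ y₁ 0 + coalVec x₁ y₁ 1 + coalVec x₁ y₁ 2)⁻¹ • coalVec x₁ y₁

lemma coalVec_sum_pos {x y : ℝ} (hx : x ∈ Set.Ioo 0 1) (hy : 0 < y) :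
    0 < coalVec x y 0 + coalVec x y 1 + coalVec x y 2 := by
  obtain ⟨hx0, hx1⟩ := hx
  have h3 : x ^ 3 < 1 := pow_lt_one₀ hx0.le hx1 (by norm_num)
  have h6 : x ^ 6 < 1 := pow_lt_one₀ hx0.le hx1 (by norm_num)
  simp only [coalVec, Matrix.cons_val_zero, Matrix.cons_val_one, Matrix.cons_val_two,
    Matrix.head_cons, Matrix.tail_cons]
  have : 0 < y * (1 - x) := mul_pos hy (sub_pos.mpr hx1)
  have : 0 < y * (1 - x ^ 3) := mul_pos hy (sub_pos.mpr h3)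
  have : 0 < y * (1 - x ^ 6) := mul_pos hy (sub_pos.mpr h6)
  positivity

lemma coalVec_one (x : ℝ) : coalVec x 1 = ![1, 1 / 3, 1 / 6] := by
  ext i; fin_cases i <;> simp [coalVec]

lemma g_one (x : ℝ) : g x 1 = ![2 / 3, 2 / 9, 1 / 9] := by
  ext i; fin_cases i <;> norm_num [g, coalVec_one, Matrix.cons_val_two, Matrix.tail_cons]

lemma eq_smul_of_inv_smul_eq {ι : Type*} {a b : ι → ℝ} {s t : ℝ} (ht : t ≠ 0)
    (h : s⁻¹ • a = t⁻¹ • b) : b = (t * s⁻¹) • a := by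
  rw [mul_smul, h, smul_inv_smul₀ ht]

lemma eq_of_cross_mul_pow_eq {u w : ℝ} (hu : 0 < u) (hw : 0 < w) (hu1 : u ≠ 1) (hw1 : w ≠ 1)
    (h : (u ^ 3 - u) * (w ^ 6 - w ^ 3) = (u ^ 6 - u ^ 3) * (w ^ 3 - w)) : u = w := by
  have hQ : 0 < u * w * (u ^ 2 + u * w + w ^ 2) + (u ^ 3 + u ^ 2 * w + u * w ^ 2 + w ^ 3) +
      u * w * (u + w) + (u ^ 2 + u * w + w ^ 2) + u * w + (u + w) := by positivity
  have hfac : (w - u) * (u * w * (1 - u) * (1 - w) * (u * w * (u ^ 2 + u * w + w ^ 2) +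
      (u ^ 3 + u ^ 2 * w + u * w ^ 2 + w ^ 3) + u * w * (u + w) + (u ^ 2 + u * w + w ^ 2) +
      u * w + (u + w))) = 0 := by
    linear_combination h
  have hne : u * w * (1 - u) * (1 - w) * _ ≠ 0 :=
    mul_ne_zero (mul_ne_zero (mul_ne_zero (mul_ne_zero hu.ne' hw.ne') (sub_ne_zero.mpr hu1.symm))
      (sub_ne_zero.mpr hw1.symm)) hQ.ne'
  exact (sub_eq_zero.mp ((mul_eq_zero.mp hfac).resolve_right hne)).symm

lemma eq_of_coalVec_eq_smul {u v w z c : ℝ} (hu : 0 < u) (hw : 0 < w) (hu1 : u ≠ 1)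
    (hw1 : w ≠ 1) (hv1 : v ≠ 1) (hz1 : z ≠ 1) (hc : c ≠ 0)
    (h : coalVec w z = c • coalVec u v) : w = u ∧ z = v := by
  have h0 := congrFun h 0
  have h1 := congrFun h 1
  have h2 := congrFun h 2
  simp only [coalVec, Pi.smul_apply, smul_eq_mul, Matrix.cons_val_zero, Matrix.cons_val_one,
    Matrix.cons_val_two, Matrix.head_cons, Matrix.tail_cons] at h0 h1 h2
  have hA : (1 - z) * (w ^ 3 - w) = c * (1 - v) * (u ^ 3 - u) := by
    linear_combination 3 * h1 - h0
  have hB : (1 - z) * (w ^ 6 - w ^ 3) = c * (1 - v) * (u ^ 6 - u ^ 3) := by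
    linear_combination 6 * h2 - 3 * h1
  have hk : c * (1 - v) * (1 - z) ≠ 0 :=
    mul_ne_zero (mul_ne_zero hc (sub_ne_zero.mpr hv1.symm)) (sub_ne_zero.mpr hz1.symm)
  have hcross : (u ^ 3 - u) * (w ^ 6 - w ^ 3) = (u ^ 6 - u ^ 3) * (w ^ 3 - w) := by
    refine mul_left_cancel₀ hk ?_
    linear_combination c * (1 - v) * (u ^ 3 - u) * hB - c * (1 - v) * (u ^ 6 - u ^ 3) * hA
  obtain rfl := eq_of_cross_mul_pow_eq hu hw hu1 hw1 hcross
  have hu3 : u ^ 3 - u ≠ 0 := by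
    have : u ^ 3 - u = u * (u - 1) * (u + 1) := by ring
    rw [this]
    exact mul_ne_zero (mul_ne_zero hu.ne' (sub_ne_zero.mpr hu1)) (by positivity)
  have hzc : 1 - z = c * (1 - v) := mul_right_cancel₀ hu3 (by linear_combination hA)
  have hc1 : c = 1 := by linear_combination -h0 - (1 - u) * hzc
  subst hc1
  exact ⟨rfl, by linear_combination -hzc⟩

/-- `g` is injective on `(0,1) × ((0,∞) \ {1})`, i.e. the map fails to be
one-to-one only along `y₁ = 1`, where it is constant equal to `(2/3, 2/9, 1/9)`. -/
theorem g_injective_off_diagonal :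
    Set.InjOn (fun q : ℝ × ℝ => g q.1 q.2)
        (Set.Ioo (0 : ℝ) 1 ×ˢ (Set.Ioi (0 : ℝ) \ {1})) ∧
      ∀ x₁ ∈ Set.Ioo (0 : ℝ) 1, g x₁ 1 = ![2/3, 2/9, 1/9] := by
  refine ⟨?_, fun x _ => g_one x⟩
  rintro ⟨u, v⟩ ⟨hu, hv, hv1⟩ ⟨w, z⟩ ⟨hw, hz, hz1⟩ hg
  have hS := coalVec_sum_pos hu hv
  have hT := coalVec_sum_pos hw hz
  have hprop := eq_smul_of_inv_smul_eq hT.ne' hg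
  obtain ⟨rfl, rfl⟩ := eq_of_coalVec_eq_smul hu.1 hw.1 hu.2.ne hw.2.ne hv1 hz1
    (mul_pos hT (inv_pos.mpr hS)).ne' hprop
  rfl
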